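/- arXiv:1510.08134 — 4 statements merged into one kernel-verified Lean document; each statement's English description precedes it below -/
import Mathlib

section
/- Let G be a finite group and {x_g : g ∈ G} a family of vectors in a Hilbert space H that is left G-stationary, i.e. ⟨x_g, x_{g'}⟩ = ⟨x_{hg}, x_{hg'}⟩ for all g, g', h ∈ G. Then there exists a unitary representation U of G on the span of {x_g} and a vector a such that x_g = U(g)a for all g ∈ G. -/
/-!
Let `π : ℂ[G] → H` send `∑ c_g g` to `∑ c_g x_g`; its range is the span of the family.
Stationarity says exactly that `π ∘ λ(h)` has the same Gram form as `π`, where `λ` is the left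
regular representation. Hence `λ(h)` preserves `ker π`, descends to `ℂ[G] ⧸ ker π ≃ range π`, and
is isometric there. The resulting unitary representation `U` satisfies `U(g) (π 1) = π g = x_g`.
-/

open scoped InnerProductSpace

theorem Finsupp.inner_linearCombination_congr {𝕜 ι E : Type*} [RCLike 𝕜]
    [NormedAddCommGroup E] [InnerProductSpace 𝕜 E] {x y : ι → E}
    (h : ∀ i j, ⟪y i, y j⟫_𝕜 = ⟪x i, x j⟫_𝕜) (v w : ι →₀ 𝕜) :
    ⟪linearCombination 𝕜 y v, linearCombination 𝕜 y w⟫_𝕜 =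
      ⟪linearCombination 𝕜 x v, linearCombination 𝕜 x w⟫_𝕜 := by
  simp only [linearCombination_apply, Finsupp.sum, sum_inner, inner_sum, inner_smul_left,
    inner_smul_right, h]

namespace Representation

section Range

variable {k G V M : Type*} [CommRing k] [Monoid G] [AddCommGroup V] [Module k V]
  [AddCommGroup M] [Module k M] (ρ : Representation k G V) (π : V →ₗ[k] M)

noncomputable def onRange (hπ : ∀ g, LinearMap.ker π ≤ (LinearMap.ker π).comap (ρ g)) :
    Representation k G (LinearMap.range π) :=
  (π.quotKerEquivRange.conjAlgEquiv k).toMonoidHom.comp (ρ.quotient _ hπ)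

theorem onRange_apply_rangeRestrict (hπ) (g : G) (v : V) :
    ρ.onRange π hπ g (π.rangeRestrict v) = π.rangeRestrict (ρ g v) := by
  have (w : V) : π.rangeRestrict w = π.quotKerEquivRange (Submodule.Quotient.mk w) := rfl
  simp [onRange, this]

end Range

section Unitary

variable {𝕜 G E : Type*} [RCLike 𝕜] [Group G] [NormedAddCommGroup E] [InnerProductSpace 𝕜 E]

def isometryOfInner (σ : Representation 𝕜 G E) (hσ : ∀ g v w, ⟪σ g v, σ g w⟫_𝕜 = ⟪v, w⟫_𝕜) :
    G →* (E ≃ₗᵢ[𝕜] E) where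
  toFun g := (LinearMap.GeneralLinearGroup.generalLinearEquiv 𝕜 E (σ.asGroupHom g)).isometryOfInner
    (hσ g)
  map_one' := by ext; simp
  map_mul' g h := by ext v; exact congr($(map_mul σ g h) v)

variable {V : Type*} [AddCommGroup V] [Module 𝕜 V] (ρ : Representation 𝕜 G V) (π : V →ₗ[𝕜] E)

theorem ker_le_comap_ker_of_inner (hρ : ∀ g v w, ⟪π (ρ g v), π (ρ g w)⟫_𝕜 = ⟪π v, π w⟫_𝕜)
    (g : G) : LinearMap.ker π ≤ (LinearMap.ker π).comap (ρ g) := by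
  intro v hv
  rw [LinearMap.mem_ker] at hv
  rw [Submodule.mem_comap, LinearMap.mem_ker, ← inner_self_eq_zero (𝕜 := 𝕜), hρ, hv,
    inner_zero_left]

theorem inner_onRange_of_inner (hρ : ∀ g v w, ⟪π (ρ g v), π (ρ g w)⟫_𝕜 = ⟪π v, π w⟫_𝕜) (g : G)
    (u w : LinearMap.range π) :
    ⟪ρ.onRange π (ker_le_comap_ker_of_inner ρ π hρ) g u,
      ρ.onRange π (ker_le_comap_ker_of_inner ρ π hρ) g w⟫_𝕜 = ⟪u, w⟫_𝕜 := by
  obtain ⟨v, rfl⟩ := π.surjective_rangeRestrict u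
  obtain ⟨v', rfl⟩ := π.surjective_rangeRestrict w
  simp only [onRange_apply_rangeRestrict, Submodule.coe_inner, LinearMap.codRestrict_apply, hρ]

theorem exists_isometry_onRange_of_inner
    (hρ : ∀ g v w, ⟪π (ρ g v), π (ρ g w)⟫_𝕜 = ⟪π v, π w⟫_𝕜) :
    ∃ U : G →* (LinearMap.range π ≃ₗᵢ[𝕜] LinearMap.range π),
      ∀ g v, U g (π.rangeRestrict v) = π.rangeRestrict (ρ g v) :=
  ⟨(ρ.onRange π _).isometryOfInner (inner_onRange_of_inner ρ π hρ),
    onRange_apply_rangeRestrict ρ π _⟩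

end Unitary

end Representation

section Stationary

variable {𝕜 G E : Type*} [RCLike 𝕜] [Group G] [NormedAddCommGroup E] [InnerProductSpace 𝕜 E]

theorem linearCombination_coeff_leftRegular (x : G → E) (g : G) (v : MonoidAlgebra 𝕜 G) :
    Finsupp.linearCombination 𝕜 x (Representation.leftRegular 𝕜 G g v).coeff =
      Finsupp.linearCombination 𝕜 (fun u => x (g * u)) v.coeff := by
  simp [Representation.ofMulAction_def, Function.comp_def]

theorem inner_linearCombination_coeff_leftRegular {x : G → E}
    (hstat : ∀ g g' h : G, ⟪x g, x g'⟫_𝕜 = ⟪x (h * g), x (h * g')⟫_𝕜)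
    (g : G) (v w : MonoidAlgebra 𝕜 G) :
    ⟪Finsupp.linearCombination 𝕜 x (Representation.leftRegular 𝕜 G g v).coeff,
      Finsupp.linearCombination 𝕜 x (Representation.leftRegular 𝕜 G g w).coeff⟫_𝕜 =
      ⟪Finsupp.linearCombination 𝕜 x v.coeff, Finsupp.linearCombination 𝕜 x w.coeff⟫_𝕜 := by
  simp only [linearCombination_coeff_leftRegular]
  exact Finsupp.inner_linearCombination_congr (fun u u' => (hstat u u' g).symm) _ _

end Stationary

theorem stmt_1_general {G : Type*} [Group G]
    {H : Type*} [NormedAddCommGroup H] [InnerProductSpace ℂ H]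
    (x : G → H)
    (hstat : ∀ g g' h : G,
      (inner ℂ (x g) (x g') : ℂ) = inner ℂ (x (h * g)) (x (h * g'))) :
    ∃ (U : G →* (↥(Submodule.span ℂ (Set.range x)) ≃ₗᵢ[ℂ]
        ↥(Submodule.span ℂ (Set.range x))))
      (a : ↥(Submodule.span ℂ (Set.range x))),
      ∀ g : G, ((U g a : ↥(Submodule.span ℂ (Set.range x))) : H) = x g := by
  set π := Finsupp.linearCombination ℂ x ∘ₗ (MonoidAlgebra.coeffLinearEquiv ℂ).toLinearMap
  have hrange : LinearMap.range π = Submodule.span ℂ (Set.range x) := by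
    rw [LinearMap.range_comp_of_range_eq_top _ (LinearEquiv.range _),
      Finsupp.range_linearCombination]
  have hρ : ∀ g v w, ⟪π (Representation.leftRegular ℂ G g v),
      π (Representation.leftRegular ℂ G g w)⟫_ℂ = ⟪π v, π w⟫_ℂ := by
    simpa [π] using inner_linearCombination_coeff_leftRegular hstat
  obtain ⟨U, hU⟩ := Representation.exists_isometry_onRange_of_inner _ π hρ
  rw [← hrange]
  refine ⟨U, π.rangeRestrict (MonoidAlgebra.single 1 1), fun g => ?_⟩
  rw [hU]
  simp [π]

theorem stmt_1 {G : Type*} [Group G] [Fintype G]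
    {H : Type*} [NormedAddCommGroup H] [InnerProductSpace ℂ H]
    (x : G → H)
    (hstat : ∀ g g' h : G,
      (inner ℂ (x g) (x g') : ℂ) = inner ℂ (x (h * g)) (x (h * g'))) :
    ∃ (U : G →* (↥(Submodule.span ℂ (Set.range x)) ≃ₗᵢ[ℂ]
        ↥(Submodule.span ℂ (Set.range x))))
      (a : ↥(Submodule.span ℂ (Set.range x))),
      ∀ g : G, ((U g a : ↥(Submodule.span ℂ (Set.range x))) : H) = x g :=
  stmt_1_general x hstat
end

section
/- Let G be a finite group, U a unitary representation of G on H, a, b_1,…,b_N ∈ H with {U(g)a}_{g∈G} linearly independent spanning A_a, K = {τ_0=e,…,τ_{ℓ−1}} an abelian subgroup of G with complement H₀ of order |G|/ℓ, and R_{b,a} the Nℓ×|G| cross-covariance matrix with rows indexed by (j,n) and entries R_{b_j,a}(τ_n⁻¹ s) = ⟨b_j, U(τ_n⁻¹ s)a⟩ for s ∈ G. If rank R_{b,a} = |G|, then there exist vectors c_1,…,c_N ∈ A_a such that {U(τ_n)c_j : j = 1,…,N, n = 0,…,ℓ−1} spans A_a and every x ∈ A_a satisfies x = Σ_{j=1}^N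 Σ_{n=0}^{ℓ−1} L_j x(τ_n) · U(τ_n) c_j, where L_j x(τ_n) = ⟨U(τ_n)b_j, x⟩. -/
/-!
The rank condition says that the sampling map `x ↦ (⟪U(τₙ) bⱼ, x⟫)_{j,n}` is injective on `A`:
on the generators `U(s) a` it is given by the columns of `R`. Hence it has a left inverse, that is,
a family `d_{j,k} ∈ A` with `x = ∑ ⟪U(k) bⱼ, x⟫ d_{j,k}` on `A`. The sampling map intertwines
`U(m)` with the translation `k ↦ m⁻¹ k` of the sample index, so every translate
`U(m) d_{j, m⁻¹ k}` is again such a family, and their average over `m ∈ K` has the form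
`U(k) cⱼ`.
-/

open Finset Submodule

theorem Matrix.mulVec_injective_of_rank_eq_card {R m n : Type*} [Field R] [Fintype n]
    {M : Matrix m n R} (h : M.rank = Fintype.card n) : Function.Injective M.mulVec := by
  have := M.mulVecLin.finrank_range_add_finrank_ker
  rw [Module.finrank_fintype_fun_eq_card, ← Matrix.rank, h, add_eq_left,
    Submodule.finrank_eq_zero] at this
  exact LinearMap.ker_eq_bot.mp this

section Reconstruction

variable {R M ι : Type*} [Field R] [AddCommGroup M] [Module R M]

theorem eq_zero_of_mem_span_of_rank_eq_card {n : Type*} [Fintype n] (φ : ι → M →ₗ[R] R)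
    (w : n → M)
    (hrank : (Matrix.of fun i s => φ i (w s)).rank = Fintype.card n)
    {x : M} (hx : x ∈ span R (Set.range w)) (h0 : ∀ i, φ i x = 0) : x = 0 := by
  obtain ⟨α, rfl⟩ := (mem_span_range_iff_exists_fun R).mp hx
  have hα : (Matrix.of fun i s => φ i (w s)).mulVec α = 0 := by
    ext i
    simpa [Matrix.mulVec, dotProduct, mul_comm] using h0 i
  simp [Matrix.mulVec_injective_of_rank_eq_card hrank (hα.trans (Matrix.mulVec_zero _).symm)]

variable [Fintype ι]

def IsReconstruction (A : Submodule R M) (φ : ι → M →ₗ[R] R) (d : ι → M) : Prop :=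
  ∀ x ∈ A, x = ∑ i, φ i x • d i

theorem exists_isReconstruction (A : Submodule R M) (φ : ι → M →ₗ[R] R)
    (hφ : ∀ x ∈ A, (∀ i, φ i x = 0) → x = 0) :
    ∃ d : ι → M, (∀ i, d i ∈ A) ∧ IsReconstruction A φ d := by
  classical
  obtain ⟨S, hS⟩ := ((LinearMap.pi φ).domRestrict A).exists_leftInverse_of_injective <|
    LinearMap.ker_eq_bot'.mpr fun x hx => Subtype.ext <| hφ x x.2 fun i => congrFun hx i
  refine ⟨fun i => S (fun j => if i = j then 1 else 0), fun i => (S _).2, fun x hx => ?_⟩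
  have := congrArg Subtype.val (LinearMap.congr_fun hS ⟨x, hx⟩)
  rw [LinearMap.comp_apply, LinearMap.pi_apply_eq_sum_univ] at this
  simpa using this.symm

namespace IsReconstruction

variable {A : Submodule R M} {φ : ι → M →ₗ[R] R} {d : ι → M}

theorem comp_equiv {ι' : Type*} [Fintype ι'] (hd : IsReconstruction A φ d) (e : ι' ≃ ι) :
    IsReconstruction A (φ ∘ e) (d ∘ e) := fun x hx =>
  (hd x hx).trans (e.sum_comp fun i => φ i x • d i).symm

theorem span_range_eq (hd : IsReconstruction A φ d) (hdA : ∀ i, d i ∈ A) :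
    span R (Set.range d) = A := by
  refine le_antisymm (span_le.mpr <| Set.range_subset_iff.mpr hdA) fun x hx => ?_
  rw [hd x hx]
  exact sum_mem fun i _ => smul_mem _ _ (subset_span ⟨i, rfl⟩)

theorem average [CharZero R] {κ : Type*} [Fintype κ] [Nonempty κ] {D : κ → ι → M}
    (hD : ∀ m, IsReconstruction A φ (D m)) :
    IsReconstruction A φ fun i => (Fintype.card κ : R)⁻¹ • ∑ m, D m i := by
  intro x hx
  have hκ : (Fintype.card κ : R) ≠ 0 := Nat.cast_ne_zero.mpr Fintype.card_ne_zero
  calc x = (Fintype.card κ : R)⁻¹ • ∑ _m : κ, x := by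
        rw [sum_const, card_univ, ← Nat.cast_smul_eq_nsmul R, smul_smul, inv_mul_cancel₀ hκ,
          one_smul]
    _ = (Fintype.card κ : R)⁻¹ • ∑ m, ∑ i, φ i x • D m i :=
        congrArg _ (sum_congr rfl fun m _ => hD m x hx)
    _ = ∑ i, φ i x • ((Fintype.card κ : R)⁻¹ • ∑ m, D m i) := by
        simp_rw [sum_comm (γ := κ), smul_sum, smul_comm (φ _ x)]

end IsReconstruction

end Reconstruction

section UnitaryRepresentation

variable {𝕜 G H ι : Type*} [RCLike 𝕜] [NormedAddCommGroup H] [InnerProductSpace 𝕜 H]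

theorem map_mem_span_range_orbit [Monoid G] (U : G →* (H ≃ₗᵢ[𝕜] H)) (a : H) (g : G) {x : H}
    (hx : x ∈ span 𝕜 (Set.range fun s => U s a)) :
    U g x ∈ span 𝕜 (Set.range fun s => U s a) := by
  have hmap : (span 𝕜 (Set.range fun s => U s a)).map (U g).toLinearEquiv.toLinearMap ≤
      span 𝕜 (Set.range fun s => U s a) := by
    rw [map_span_le]
    rintro _ ⟨s, rfl⟩
    exact subset_span ⟨g * s, by simp [map_mul]⟩
  exact hmap (mem_map_of_mem hx)

variable [Group G] [Fintype G] [Fintype ι] (U : G →* (H ≃ₗᵢ[𝕜] H)) (b : ι → H)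
  {A : Submodule 𝕜 H}

theorem IsReconstruction.translate (hA : ∀ g, ∀ x ∈ A, U g x ∈ A) {d : ι × G → H}
    (hd : IsReconstruction A (fun p => innerₛₗ 𝕜 (U p.2 (b p.1))) d) (m : G) :
    IsReconstruction A (fun p => innerₛₗ 𝕜 (U p.2 (b p.1)))
      fun p : ι × G => U m (d (p.1, m⁻¹ * p.2)) := by
  intro x hx
  calc x = U m (U m⁻¹ x) := by simp
    _ = ∑ p : ι × G, inner 𝕜 (U (m * p.2) (b p.1)) x • U m (d p) := by
        conv_lhs => rw [hd _ (hA _ _ hx)]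
        simp [map_sum, LinearIsometryEquiv.inner_map_eq_flip]
    _ = ∑ p : ι × G, inner 𝕜 (U p.2 (b p.1)) x • U m (d (p.1, m⁻¹ * p.2)) := by
        conv_rhs => rw [← (Equiv.prodCongrRight fun _ => Equiv.mulLeft m).sum_comp]
        simp

theorem IsReconstruction.exists_shift_invariant (hA : ∀ g, ∀ x ∈ A, U g x ∈ A)
    {d : ι × G → H} (hd : IsReconstruction A (fun p => innerₛₗ 𝕜 (U p.2 (b p.1))) d)
    (hdA : ∀ p, d p ∈ A) :
    ∃ c : ι → H, (∀ j, c j ∈ A) ∧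
      IsReconstruction A (fun p => innerₛₗ 𝕜 (U p.2 (b p.1)))
        fun p : ι × G => U p.2 (c p.1) := by
  refine ⟨fun j => (Fintype.card G : 𝕜)⁻¹ • ∑ m, U m (d (j, m⁻¹)),
    fun j => smul_mem _ _ (sum_mem fun m _ => hA _ _ (hdA _)), ?_⟩
  convert IsReconstruction.average fun m => hd.translate U b hA m using 2 with p
  rw [map_smul, map_sum]
  conv_rhs => rw [← Equiv.sum_comp (Equiv.mulLeft p.2)]
  simp [mul_assoc]

end UnitaryRepresentation

theorem stmt_13_general {G : Type*} [Group G] [Fintype G]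
    {H : Type*} [NormedAddCommGroup H] [InnerProductSpace ℂ H]
    (U : G →* (H ≃ₗᵢ[ℂ] H)) (a : H)
    (A : Submodule ℂ H) (hA : A = Submodule.span ℂ (Set.range fun g : G => U g a))
    {N ℓ : ℕ} (b : Fin N → H)
    (K : Subgroup G)
    (τ : Fin ℓ → G) (hτrange : Set.range τ = (K : Set G)) (hτinj : Function.Injective τ)
    (R : Matrix (Fin N × Fin ℓ) G ℂ)
    (hR : ∀ (j : Fin N) (n : Fin ℓ) (s : G),
      R (j, n) s = (inner ℂ (b j) (U ((τ n)⁻¹ * s) a) : ℂ))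
    (hrank : R.rank = Fintype.card G) :
    ∃ c : Fin N → H, (∀ j, c j ∈ A) ∧
      Submodule.span ℂ (Set.range fun p : Fin N × Fin ℓ => U (τ p.2) (c p.1)) = A ∧
      ∀ x ∈ A, x = ∑ j : Fin N, ∑ n : Fin ℓ,
        (inner ℂ (U (τ n) (b j)) x : ℂ) • U (τ n) (c j) := by
  classical
  subst hA
  let eK : Fin ℓ ≃ K := (Equiv.ofInjective τ hτinj).trans (Equiv.setCongr hτrange)
  have heK (n : Fin ℓ) : (eK n : G) = τ n := rfl
  let e : Fin N × Fin ℓ ≃ Fin N × K := (Equiv.refl _).prodCongr eK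
  let V := U.comp K.subtype
  have hinj : ∀ x ∈ span ℂ (Set.range fun g => U g a),
      (∀ p : Fin N × K, innerₛₗ ℂ (V p.2 (b p.1)) x = 0) → x = 0 := by
    have hRof : Matrix.of (fun p s => innerₛₗ ℂ (V (e p).2 (b p.1)) (U s a)) = R := by
      ext ⟨j, n⟩ s
      simp [hR, V, e, heK, LinearIsometryEquiv.inner_map_eq_flip]
    exact fun x hx h0 =>
      eq_zero_of_mem_span_of_rank_eq_card _ _ (hRof ▸ hrank) hx fun p => h0 (e p)
  obtain ⟨d, hdA, hd⟩ := exists_isReconstruction _ _ hinj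
  obtain ⟨c, hcA, hc⟩ :=
    hd.exists_shift_invariant V b (fun k _ => map_mem_span_range_orbit U a k) hdA
  have hc' := hc.comp_equiv e
  refine ⟨c, hcA, hc'.span_range_eq fun _ => map_mem_span_range_orbit U a _ (hcA _),
    fun x hx => ?_⟩
  rw [← Fintype.sum_prod_type']
  exact hc' x hx

theorem stmt_13 {G : Type*} [Group G] [Fintype G]
    {H : Type*} [NormedAddCommGroup H] [InnerProductSpace ℂ H]
    (U : G →* (H ≃ₗᵢ[ℂ] H)) (a : H)
    (ha : LinearIndependent ℂ (fun g : G => U g a))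
    (A : Submodule ℂ H) (hA : A = Submodule.span ℂ (Set.range fun g : G => U g a))
    {N ℓ : ℕ} (b : Fin N → H)
    (K : Subgroup G) (hKab : ∀ x ∈ K, ∀ y ∈ K, x * y = y * x)
    (hKcard : Nat.card K = ℓ)
    (H₀ : Subgroup G) (hcompl : ∀ g : G, ∃ k ∈ K, ∃ h ∈ H₀, g = k * h)
    (htriv : K ⊓ H₀ = ⊥) (hH₀card : Nat.card H₀ = Fintype.card G / ℓ)
    (τ : Fin ℓ → G) (hτrange : Set.range τ = (K : Set G)) (hτinj : Function.Injective τ)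
    (hτ0 : ∀ h0 : 0 < ℓ, τ ⟨0, h0⟩ = 1)
    (R : Matrix (Fin N × Fin ℓ) G ℂ)
    (hR : ∀ (j : Fin N) (n : Fin ℓ) (s : G),
      R (j, n) s = (inner ℂ (b j) (U ((τ n)⁻¹ * s) a) : ℂ))
    (hrank : R.rank = Fintype.card G) :
    ∃ c : Fin N → H, (∀ j, c j ∈ A) ∧
      Submodule.span ℂ (Set.range fun p : Fin N × Fin ℓ => U (τ p.2) (c p.1)) = A ∧
      ∀ x ∈ A, x = ∑ j : Fin N, ∑ n : Fin ℓ,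
        (inner ℂ (U (τ n) (b j)) x : ℂ) • U (τ n) (c j) :=
  stmt_13_general U a A hA b K τ hτrange hτinj R hR hrank
end

section
/- In the setting of the previous theorem, the following are equivalent: (1) rank R_{b,a} = |G|; (2) there exist vectors c_j ∈ A_a such that {U(τ_n)c_j} spans A_a and the sampling expansion x = Σ_{j,n} L_j x(τ_n) U(τ_n)c_j holds for all x ∈ A_a; (3) there exists some family {C_{j,n}} in A_a such that x = Σ_{j,n} L_j x(τ_n) C_{j,n} for all x ∈ A_a. -/
/-!
Rank condition (1) says that the columns `Φ (U s a)` of `R` are linearly independent, where `Φ` is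
the sampling map `x ↦ (⟪U (τ n) (b j), x⟫)_(j,n)`. Since the `U s a` form a basis of `A`, this means
that `Φ` is injective on `A`, i.e. has a left inverse on `A`, which is the same as a reconstruction
formula (3). A reconstruction formula `C` is turned into one of the shift-invariant form (2) by
translating it by each `m ∈ K` and averaging over `K`: `c j = |K|⁻¹ • ∑ m, U m (C j m⁻¹)`.
-/

open Finset

theorem Matrix.rank_eq_card_iff_linearIndependent_col {m n K : Type*} [Fintype m] [Fintype n]
    [Field K] (M : Matrix m n K) :
    M.rank = Fintype.card n ↔ LinearIndependent K M.col := by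
  rw [rank_eq_finrank_span_cols, linearIndependent_iff_card_eq_finrank_span, eq_comm]
  rfl

theorem LinearIndependent.linearIndependent_comp_iff_disjoint {R M M' ι : Type*} [Ring R]
    [AddCommGroup M] [Module R M] [AddCommGroup M'] [Module R M'] {v : ι → M}
    (hv : LinearIndependent R v) (f : M →ₗ[R] M') :
    LinearIndependent R (f ∘ v) ↔ Disjoint (Submodule.span R (Set.range v)) (LinearMap.ker f) :=
  ⟨Submodule.range_ker_disjoint, hv.map⟩

theorem exists_reconstruction_iff_disjoint_ker {K M ι : Type*} [Field K] [AddCommGroup M]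
    [Module K M] [Fintype ι] (A : Submodule K M) (f : M →ₗ[K] ι → K) :
    (∃ C : ι → M, (∀ i, C i ∈ A) ∧ ∀ x ∈ A, x = ∑ i, f x i • C i) ↔
      Disjoint A (LinearMap.ker f) := by
  classical
  rw [LinearMap.disjoint_ker]
  constructor
  · rintro ⟨C, -, hC⟩ x hx hfx
    rw [hC x hx, hfx]
    simp
  · intro hf
    have hker : LinearMap.ker (f ∘ₗ A.subtype) = ⊥ :=
      LinearMap.ker_eq_bot'.2 fun x hx => Subtype.ext (hf x x.2 hx)
    obtain ⟨Ψ, hΨ⟩ := (f ∘ₗ A.subtype).exists_leftInverse_of_injective hker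
    refine ⟨fun i => Ψ (fun j => if i = j then 1 else 0), fun i => (Ψ _).2, fun x hx => ?_⟩
    have hΨx : Ψ (f x) = ⟨x, hx⟩ := LinearMap.congr_fun hΨ ⟨x, hx⟩
    calc x = Ψ (f x) := congrArg Subtype.val hΨx.symm
      _ = _ := by rw [Ψ.pi_apply_eq_sum_univ]; simp

section UnitaryRepresentation

variable {𝕜 E G ι κ : Type*} [RCLike 𝕜] [NormedAddCommGroup E] [InnerProductSpace 𝕜 E]
  [Group G] (U : G →* (E ≃ₗᵢ[𝕜] E))

theorem MonoidHom.isometryEquiv_map_mul_apply (g h : G) (x : E) : U (g * h) x = U g (U h x) := by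
  rw [map_mul, LinearIsometryEquiv.coe_mul, Function.comp_apply]

theorem MonoidHom.inner_isometryEquiv_apply_left (g : G) (y x : E) :
    inner 𝕜 (U g y) x = inner 𝕜 y (U g⁻¹ x) := by
  rw [← (U g).inner_map_map y, ← U.isometryEquiv_map_mul_apply, mul_inv_cancel, map_one]
  rfl

theorem MonoidHom.isometryEquiv_mem_span_orbit (a : E) (g : G) {x : E}
    (hx : x ∈ Submodule.span 𝕜 (Set.range fun s => U s a)) :
    U g x ∈ Submodule.span 𝕜 (Set.range fun s => U s a) := by
  refine (Submodule.span_le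
    (p := (Submodule.span 𝕜 _).comap (U g).toLinearEquiv.toLinearMap)).2 ?_ hx
  rintro - ⟨s, rfl⟩
  exact Submodule.subset_span ⟨g * s, U.isometryEquiv_map_mul_apply g s a⟩

def samplingMap (b : ι → E) (τ : κ → G) : E →ₗ[𝕜] ι × κ → 𝕜 :=
  LinearMap.pi fun p => innerₛₗ 𝕜 (U (τ p.2) (b p.1))

theorem samplingMap_apply (b : ι → E) (τ : κ → G) (x : E) (p : ι × κ) :
    samplingMap U b τ x p = inner 𝕜 (U (τ p.2) (b p.1)) x :=
  rfl

variable [Fintype ι]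

theorem exists_equivariant_reconstruction [Fintype G] (A : Submodule 𝕜 E)
    (hA : ∀ g, ∀ x ∈ A, U g x ∈ A) (b : ι → E) (C : ι → G → E) (hCA : ∀ j k, C j k ∈ A)
    (hC : ∀ x ∈ A, x = ∑ j, ∑ k, inner 𝕜 (U k (b j)) x • C j k) :
    ∃ c : ι → E, (∀ j, c j ∈ A) ∧ ∀ x ∈ A, x = ∑ j, ∑ k, inner 𝕜 (U k (b j)) x • U k (c j) := by
  set c : ι → E := fun j => (Fintype.card G : 𝕜)⁻¹ • ∑ m, U m (C j m⁻¹)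
  have hcard : (Fintype.card G : 𝕜) ≠ 0 := Nat.cast_ne_zero.2 Fintype.card_ne_zero
  have htranslate : ∀ g, ∀ x ∈ A,
      x = ∑ j, ∑ k, inner 𝕜 (U k (b j)) x • U g (C j (g⁻¹ * k)) := by
    intro g x hx
    have h := congrArg (U g) (hC _ (hA g⁻¹ x hx))
    rw [← U.isometryEquiv_map_mul_apply, mul_inv_cancel, map_one] at h
    refine h.trans ?_
    simp only [map_sum, map_smul, ← U.inner_isometryEquiv_apply_left,
      ← U.isometryEquiv_map_mul_apply]
    exact sum_congr rfl fun j _ => (Equiv.sum_comp (Equiv.mulLeft g⁻¹) _).symm.trans (by simp)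
  have hshift : ∀ j k, ∑ g, U g (C j (g⁻¹ * k)) = (Fintype.card G : 𝕜) • U k (c j) := by
    intro j k
    rw [map_smul, smul_smul, mul_inv_cancel₀ hcard, one_smul, map_sum,
      ← Equiv.sum_comp (Equiv.mulLeft k)]
    simp
  refine ⟨c, fun j => A.smul_mem _ (A.sum_mem fun m _ => hA m _ (hCA j _)), fun x hx => ?_⟩
  apply smul_right_injective E hcard
  calc (Fintype.card G : 𝕜) • x = ∑ g : G, x := by
        rw [sum_const, card_univ, Nat.cast_smul_eq_nsmul]
    _ = ∑ g, ∑ j, ∑ k, inner 𝕜 (U k (b j)) x • U g (C j (g⁻¹ * k)) :=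
        sum_congr rfl fun g _ => htranslate g x hx
    _ = ∑ j, ∑ k, inner 𝕜 (U k (b j)) x • ∑ g, U g (C j (g⁻¹ * k)) := by
        rw [sum_comm]
        simp only [smul_sum]
        exact sum_congr rfl fun j _ => sum_comm
    _ = _ := by simp only [hshift, smul_sum, smul_comm (Fintype.card G : 𝕜)]

variable [Fintype κ]

theorem exists_reconstruction_iff_disjoint_ker_samplingMap (A : Submodule 𝕜 E) (b : ι → E)
    (τ : κ → G) :
    (∃ C : ι → κ → E, (∀ j n, C j n ∈ A) ∧
        ∀ x ∈ A, x = ∑ j, ∑ n, inner 𝕜 (U (τ n) (b j)) x • C j n) ↔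
      Disjoint A (LinearMap.ker (samplingMap U b τ)) := by
  rw [← exists_reconstruction_iff_disjoint_ker]
  constructor
  · rintro ⟨C, hCA, hC⟩
    refine ⟨Function.uncurry C, fun p => hCA p.1 p.2, fun x hx => ?_⟩
    exact (hC x hx).trans (by rw [Fintype.sum_prod_type]; rfl)
  · rintro ⟨C, hCA, hC⟩
    refine ⟨Function.curry C, fun j n => hCA (j, n), fun x hx => ?_⟩
    exact (hC x hx).trans (by rw [Fintype.sum_prod_type]; rfl)

theorem exists_equivariant_reconstruction_of_range_eq (A : Submodule 𝕜 E) (K : Subgroup G)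
    (hA : ∀ k ∈ K, ∀ x ∈ A, U k x ∈ A) (b : ι → E) (τ : κ → G)
    (hτrange : Set.range τ = (K : Set G)) (hτinj : Function.Injective τ)
    (C : ι → κ → E) (hCA : ∀ j n, C j n ∈ A)
    (hC : ∀ x ∈ A, x = ∑ j, ∑ n, inner 𝕜 (U (τ n) (b j)) x • C j n) :
    ∃ c : ι → E, (∀ j, c j ∈ A) ∧
      ∀ x ∈ A, x = ∑ j, ∑ n, inner 𝕜 (U (τ n) (b j)) x • U (τ n) (c j) := by
  let e : κ ≃ K := (Equiv.ofInjective τ hτinj).trans (Equiv.setCongr hτrange)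
  let : Fintype K := Fintype.ofEquiv κ e
  have he : ∀ n, U.comp K.subtype (e n) = U (τ n) := fun n => rfl
  obtain ⟨c, hcA, hc⟩ := exists_equivariant_reconstruction (U.comp K.subtype) A
    (fun k => hA k k.2) b (fun j k => C j (e.symm k)) (fun _ _ => hCA _ _) fun x hx => by
      simpa only [← e.sum_comp, e.symm_apply_apply, he] using hC x hx
  exact ⟨c, hcA, fun x hx => by simpa only [← e.sum_comp, he] using hc x hx⟩

end UnitaryRepresentation

theorem stmt_14_general {G : Type*} [Group G] [Fintype G]
    {H : Type*} [NormedAddCommGroup H] [InnerProductSpace ℂ H]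
    (U : G →* (H ≃ₗᵢ[ℂ] H)) (a : H)
    (ha : LinearIndependent ℂ (fun g : G => U g a))
    (A : Submodule ℂ H) (hA : A = Submodule.span ℂ (Set.range fun g : G => U g a))
    {N ℓ : ℕ} (b : Fin N → H)
    (K : Subgroup G)
    (τ : Fin ℓ → G) (hτrange : Set.range τ = (K : Set G)) (hτinj : Function.Injective τ)
    (R : Matrix (Fin N × Fin ℓ) G ℂ)
    (hR : ∀ (j : Fin N) (n : Fin ℓ) (s : G),
      R (j, n) s = (inner ℂ (b j) (U ((τ n)⁻¹ * s) a) : ℂ)) :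
    ((R.rank = Fintype.card G) ↔
      (∃ c : Fin N → H, (∀ j, c j ∈ A) ∧
        Submodule.span ℂ (Set.range fun p : Fin N × Fin ℓ => U (τ p.2) (c p.1)) = A ∧
        ∀ x ∈ A, x = ∑ j : Fin N, ∑ n : Fin ℓ,
          (inner ℂ (U (τ n) (b j)) x : ℂ) • U (τ n) (c j)))
    ∧ ((R.rank = Fintype.card G) ↔
      (∃ C : Fin N → Fin ℓ → H, (∀ j n, C j n ∈ A) ∧
        ∀ x ∈ A, x = ∑ j : Fin N, ∑ n : Fin ℓ,
          (inner ℂ (U (τ n) (b j)) x : ℂ) • C j n)) := by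
  have hAinv : ∀ g, ∀ x ∈ A, U g x ∈ A := hA ▸ U.isometryEquiv_mem_span_orbit a
  have hcol : R.col = samplingMap U b τ ∘ fun s => U s a := by
    ext s ⟨j, n⟩
    rw [Function.comp_apply, samplingMap_apply, U.inner_isometryEquiv_apply_left,
      ← U.isometryEquiv_map_mul_apply, ← hR]
    rfl
  have hrank : R.rank = Fintype.card G ↔ ∃ C : Fin N → Fin ℓ → H, (∀ j n, C j n ∈ A) ∧
      ∀ x ∈ A, x = ∑ j, ∑ n, (inner ℂ (U (τ n) (b j)) x : ℂ) • C j n := by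
    rw [R.rank_eq_card_iff_linearIndependent_col, hcol, ha.linearIndependent_comp_iff_disjoint,
      ← hA, exists_reconstruction_iff_disjoint_ker_samplingMap]
  refine ⟨⟨fun h => ?_, ?_⟩, hrank⟩
  · obtain ⟨C, hCA, hC⟩ := hrank.1 h
    obtain ⟨c, hcA, hc⟩ := exists_equivariant_reconstruction_of_range_eq U A K
      (fun k _ => hAinv k) b τ hτrange hτinj C hCA hC
    refine ⟨c, hcA, Submodule.span_eq_of_le _ ?_ fun x hx => ?_, hc⟩
    · rintro - ⟨p, rfl⟩
      exact hAinv _ _ (hcA p.1)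
    · rw [hc x hx, ← Fintype.sum_prod_type']
      exact Submodule.sum_mem _ fun p _ => Submodule.smul_mem _ _ (Submodule.subset_span ⟨p, rfl⟩)
  · rintro ⟨c, hcA, -, hc⟩
    exact hrank.2 ⟨_, fun j n => hAinv _ _ (hcA j), hc⟩

theorem stmt_14 {G : Type*} [Group G] [Fintype G]
    {H : Type*} [NormedAddCommGroup H] [InnerProductSpace ℂ H]
    (U : G →* (H ≃ₗᵢ[ℂ] H)) (a : H)
    (ha : LinearIndependent ℂ (fun g : G => U g a))
    (A : Submodule ℂ H) (hA : A = Submodule.span ℂ (Set.range fun g : G => U g a))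
    {N ℓ : ℕ} (b : Fin N → H)
    (K : Subgroup G) (hKab : ∀ x ∈ K, ∀ y ∈ K, x * y = y * x)
    (hKcard : Nat.card K = ℓ)
    (H₀ : Subgroup G) (hcompl : ∀ g : G, ∃ k ∈ K, ∃ h ∈ H₀, g = k * h)
    (htriv : K ⊓ H₀ = ⊥)
    (τ : Fin ℓ → G) (hτrange : Set.range τ = (K : Set G)) (hτinj : Function.Injective τ)
    (R : Matrix (Fin N × Fin ℓ) G ℂ)
    (hR : ∀ (j : Fin N) (n : Fin ℓ) (s : G),
      R (j, n) s = (inner ℂ (b j) (U ((τ n)⁻¹ * s) a) : ℂ)) :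
    ((R.rank = Fintype.card G) ↔
      (∃ c : Fin N → H, (∀ j, c j ∈ A) ∧
        Submodule.span ℂ (Set.range fun p : Fin N × Fin ℓ => U (τ p.2) (c p.1)) = A ∧
        ∀ x ∈ A, x = ∑ j : Fin N, ∑ n : Fin ℓ,
          (inner ℂ (U (τ n) (b j)) x : ℂ) • U (τ n) (c j)))
    ∧ ((R.rank = Fintype.card G) ↔
      (∃ C : Fin N → Fin ℓ → H, (∀ j n, C j n ∈ A) ∧
        ∀ x ∈ A, x = ∑ j : Fin N, ∑ n : Fin ℓ,
          (inner ℂ (U (τ n) (b j)) x : ℂ) • C j n)) :=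
  stmt_14_general U a ha A hA b K τ hτrange hτinj R hR
end

section
/- Let U be a unitary operator on a Hilbert space H and a ∈ H with U^M a = a and {a, Ua, …, U^{M−1}a} linearly independent. Let r divide M, ℓ = M/r, and b_1,…,b_N ∈ H. If the Nℓ×M matrix with entries ⟨b_j, U^{rn+m}a⟩ (rows indexed by (j,n), columns by m ∈ ℤ_M) has rank M, then there exist c_1,…,c_N in A_a = span{U^k a : 0 ≤ k < M} such that every x ∈ A_a satisfies x = Σ_{j=1}^N Σ_{n=0}^{ℓ−1} ⟨U^{rn}b_j, x⟩ U^{rn} c_j. -/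
/-!
On `A = span {Uᵏ a}` the operator `U ^ M` is the identity, so `n ↦ U ^ (r * n)` is a
representation `ρ` of `ℤ_ℓ` on `A`, and the sampling map `x ↦ (⟪U ^ (r n) b_j, x⟫)_{j,n}`
intertwines `ρ` with translation of the index `n`. Evaluated on the spanning family `Uᵐ a` this
map has the columns of `Q` (up to `n ↦ -n`), so the rank condition makes it injective on `A`.
Averaging a left inverse over `ℤ_ℓ` gives an equivariant left inverse `P`; then `P` sends the
unit vector at `(j, n)` to `U ^ (r n) c_j` with `c_j = P δ_{(j,0)}`, which is the expansion.
-/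

def finPowersHom {M : Type*} [Monoid M] {n : ℕ} [NeZero n] (u : M) (hu : u ^ n = 1) :
    Multiplicative (Fin n) →* M where
  toFun g := u ^ (g.toAdd : ℕ)
  map_one' := by simp
  map_mul' g h := by rw [toAdd_mul, Fin.val_add, ← pow_eq_pow_mod _ hu, pow_add]

namespace Representation

section CommSemiring

variable {k G V ι : Type*} [CommSemiring k] [Group G] [AddCommMonoid V] [Module k V]

variable (k G ι) in
def leftTranslation : Representation k G (ι × G → k) where
  toFun h := LinearMap.funLeft k k fun p => (p.1, h⁻¹ * p.2)
  map_one' := by ext; simp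
  map_mul' _ _ := by ext; simp [mul_assoc]

def sampling (ρ : Representation k G V) (φ : ι → Module.Dual k V) : V →ₗ[k] ι × G → k :=
  LinearMap.pi fun p => φ p.1 ∘ₗ ρ p.2⁻¹

theorem isIntertwiningMap_sampling (ρ : Representation k G V) (φ : ι → Module.Dual k V) :
    ρ.IsIntertwiningMap (leftTranslation k G ι) (ρ.sampling φ) :=
  ⟨fun h v => by ext p; simp [sampling, leftTranslation, mul_inv_rev]⟩

end CommSemiring

section Field

variable {k G V W ι : Type*} [Field k] [Group G] [AddCommGroup V] [Module k V]
  [AddCommGroup W] [Module k W]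

theorem exists_leftInverse_isIntertwiningMap [Fintype G] [Invertible (Fintype.card G : k)]
    {ρ : Representation k G V} {σ : Representation k G W} {T : V →ₗ[k] W}
    (hT : ρ.IsIntertwiningMap σ T) (hinj : Function.Injective T) :
    ∃ P : W →ₗ[k] V, σ.IsIntertwiningMap ρ P ∧ P ∘ₗ T = LinearMap.id := by
  obtain ⟨P₀, hP₀⟩ := T.exists_leftInverse_of_injective (LinearMap.ker_eq_bot.mpr hinj)
  refine ⟨(linHom σ ρ).averageMap P₀,
    (mem_linHom_invariants_iff_isIntertwining _).mp ((linHom σ ρ).averageMap_invariant P₀), ?_⟩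
  have hP₀T (v : V) : P₀ (T v) = v := LinearMap.congr_fun hP₀ v
  ext v
  -- `⅟|G| • ∑ g, ρ g (P₀ (σ g⁻¹ (T v))) = ⅟|G| • ∑ g, ρ g (ρ g⁻¹ v) = v`
  simp [GroupAlgebra.average, map_sum, linHom_apply, ← hT.isIntertwining, hP₀T,
    ← Nat.cast_smul_eq_nsmul k, smul_smul]

theorem injective_sampling_of_linearIndependent {κ : Type*} {e : κ → V}
    (ρ : Representation k G V) (φ : ι → Module.Dual k V)
    (he : Submodule.span k (Set.range e) = ⊤)
    (hli : LinearIndependent k fun m (p : ι × G) => φ p.1 (ρ p.2 (e m))) :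
    Function.Injective (ρ.sampling φ) := by
  have hS : Function.Injective (LinearMap.pi fun p : ι × G => φ p.1 ∘ₗ ρ p.2) :=
    LinearMap.injective_of_linearIndependent he hli
  have hsampling : ρ.sampling φ = LinearMap.funLeft k k (fun p : ι × G => (p.1, p.2⁻¹)) ∘ₗ
      LinearMap.pi fun p : ι × G => φ p.1 ∘ₗ ρ p.2 := rfl
  rw [hsampling, LinearMap.coe_comp]
  exact (LinearMap.funLeft_injective_of_surjective k k _
    fun p => ⟨(p.1, p.2⁻¹), by simp⟩).comp hS

theorem exists_reconstruction_of_injective_sampling [Fintype G]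
    [Invertible (Fintype.card G : k)] [Fintype ι]
    (ρ : Representation k G V) (φ : ι → Module.Dual k V)
    (hinj : Function.Injective (ρ.sampling φ)) :
    ∃ c : ι → V, ∀ v, v = ∑ i, ∑ g, φ i (ρ g⁻¹ v) • ρ g (c i) := by
  classical
  obtain ⟨P, hP, hPT⟩ :=
    exists_leftInverse_isIntertwiningMap (ρ.isIntertwiningMap_sampling φ) hinj
  have hδ (i : ι) (g : G) :
      (Pi.single (i, g) 1 : ι × G → k) = leftTranslation k G ι g (Pi.single (i, 1) 1) := by
    ext ⟨j, h⟩
    simp [leftTranslation, Pi.single_apply, inv_mul_eq_one, eq_comm]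
  refine ⟨fun i => P (Pi.single (i, 1) 1), fun v => ?_⟩
  calc v = P (ρ.sampling φ v) := (LinearMap.congr_fun hPT v).symm
    _ = ∑ p : ι × G, ρ.sampling φ v p • P (Pi.single p 1) := by
      conv_lhs => rw [← Finset.univ_sum_single (ρ.sampling φ v), map_sum]
      refine Finset.sum_congr rfl fun p _ => ?_
      rw [← map_smul, ← Pi.single_smul', smul_eq_mul, mul_one]
    _ = _ := by
      rw [Fintype.sum_prod_type]
      refine Finset.sum_congr rfl fun i _ => Finset.sum_congr rfl fun g _ => ?_
      rw [hδ, hP.isIntertwining]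
      rfl

end Field

end Representation

namespace LinearIsometryEquiv

section Semiring

variable {R E : Type*} [Semiring R] [SeminormedAddCommGroup E] [Module R E]

theorem coe_pow (U : E ≃ₗᵢ[R] E) (n : ℕ) : ⇑(U ^ n) = (⇑U)^[n] :=
  hom_coe_pow _ rfl (fun _ _ => rfl) U n

variable (U : E ≃ₗᵢ[R] E) (a : E) (M : ℕ)

def cyclicSubspace : Submodule R E :=
  Submodule.span R (Set.range fun k : Fin M => (U ^ (k : ℕ)) a)

variable {U a M}

theorem pow_apply_mem_cyclicSubspace (k : Fin M) : (U ^ (k : ℕ)) a ∈ U.cyclicSubspace a M :=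
  Submodule.subset_span ⟨k, rfl⟩

theorem span_orbit_eq_top :
    Submodule.span R (Set.range fun k : Fin M =>
      (⟨(U ^ (k : ℕ)) a, pow_apply_mem_cyclicSubspace k⟩ : U.cyclicSubspace a M)) = ⊤ :=
  (Submodule.span_range_subtype_eq_top_iff _ _).mpr rfl

theorem pow_apply_eq_pow_mod_apply (h : (U ^ M) a = a) (n : ℕ) :
    (U ^ n) a = (U ^ (n % M)) a := by
  have hper : Function.IsPeriodicPt U M a := by
    rwa [Function.IsPeriodicPt, Function.IsFixedPt, ← coe_pow]
  simp only [coe_pow]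
  exact (hper.iterate_mod_apply n).symm

theorem apply_mem_cyclicSubspace (h : (U ^ M) a = a) {x : E}
    (hx : x ∈ U.cyclicSubspace a M) : U x ∈ U.cyclicSubspace a M := by
  induction hx using Submodule.span_induction with
  | mem _ hy =>
    obtain ⟨k, rfl⟩ := hy
    have hk : U ((U ^ (k : ℕ)) a) = (U ^ (((k : ℕ) + 1) % M)) a := by
      rw [← pow_apply_eq_pow_mod_apply h, pow_succ']
      rfl
    rw [hk]
    exact pow_apply_mem_cyclicSubspace ⟨_, Nat.mod_lt _ k.pos⟩
  | zero => simp
  | add _ _ _ _ hx hy => rw [map_add]; exact add_mem hx hy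
  | smul c _ _ hx => rw [map_smul]; exact Submodule.smul_mem _ c hx

theorem pow_apply_of_mem_cyclicSubspace (h : (U ^ M) a = a) {x : E}
    (hx : x ∈ U.cyclicSubspace a M) : (U ^ M) x = x := by
  refine LinearMap.eqOn_span' (f := ((U ^ M : E ≃ₗᵢ[R] E) : E →ₗ[R] E)) (g := LinearMap.id)
    ?_ hx
  rintro _ ⟨k, rfl⟩
  change (U ^ M * U ^ (k : ℕ)) a = (U ^ (k : ℕ)) a
  rw [pow_mul_comm, coe_mul, Function.comp_apply, h]

def restrictCyclicSubspace (h : (U ^ M) a = a) : Module.End R (U.cyclicSubspace a M) :=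
  (U : E →ₗ[R] E).restrict fun _ => apply_mem_cyclicSubspace h

theorem coe_restrictCyclicSubspace_pow_apply (h : (U ^ M) a = a) (n : ℕ)
    (x : U.cyclicSubspace a M) : ((restrictCyclicSubspace h ^ n) x : E) = (U ^ n) x := by
  induction n with
  | zero => rfl
  | succ n ih =>
    rw [pow_succ', Module.End.mul_apply, pow_succ', coe_mul, Function.comp_apply, ← ih]
    rfl

theorem restrictCyclicSubspace_pow_eq_one (h : (U ^ M) a = a) :
    restrictCyclicSubspace h ^ M = 1 := by
  ext x
  rw [coe_restrictCyclicSubspace_pow_apply, pow_apply_of_mem_cyclicSubspace h x.2]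
  rfl

end Semiring

section CommSemiring

variable {R E : Type*} [CommSemiring R] [SeminormedAddCommGroup E] [Module R E]
  {U : E ≃ₗᵢ[R] E} {a : E} {M : ℕ}

def cyclicSubspaceRep {r ℓ : ℕ} [NeZero ℓ] (h : (U ^ M) a = a) (hrℓ : r * ℓ = M) :
    Representation R (Multiplicative (Fin ℓ)) (U.cyclicSubspace a M) :=
  finPowersHom (restrictCyclicSubspace h ^ r)
    (by rw [← pow_mul, hrℓ, restrictCyclicSubspace_pow_eq_one])

theorem coe_cyclicSubspaceRep_apply {r ℓ : ℕ} [NeZero ℓ] (h : (U ^ M) a = a)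
    (hrℓ : r * ℓ = M) (n : Fin ℓ) (x : U.cyclicSubspace a M) :
    (cyclicSubspaceRep h hrℓ (.ofAdd n) x : E) = (U ^ (r * (n : ℕ))) x := by
  rw [← coe_restrictCyclicSubspace_pow_apply h, pow_mul]
  rfl

end CommSemiring

section InnerProduct

variable {𝕜 E ι : Type*} [RCLike 𝕜] [NormedAddCommGroup E] [InnerProductSpace 𝕜 E]
  {U : E ≃ₗᵢ[𝕜] E} {a : E} {M r ℓ : ℕ} [NeZero ℓ]

theorem inner_cyclicSubspaceRep_inv_apply (h : (U ^ M) a = a) (hrℓ : r * ℓ = M) (n : Fin ℓ)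
    (v : E) (x : U.cyclicSubspace a M) :
    inner 𝕜 v (cyclicSubspaceRep h hrℓ (.ofAdd n)⁻¹ x : E) =
      inner 𝕜 ((U ^ (r * (n : ℕ))) v) x := by
  conv_rhs => rw [← Representation.self_inv_apply (cyclicSubspaceRep h hrℓ) (.ofAdd n) x,
    coe_cyclicSubspaceRep_apply, inner_map_map]

theorem injective_sampling_cyclicSubspaceRep (h : (U ^ M) a = a)
    (hrℓ : r * ℓ = M) (b : ι → E) (Q : Matrix (ι × Fin ℓ) (Fin M) 𝕜)
    (hQ : ∀ j (n : Fin ℓ) (m : Fin M),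
      Q (j, n) m = inner 𝕜 (b j) ((U ^ (r * (n : ℕ) + (m : ℕ))) a))
    (hrank : Q.rank = M) :
    Function.Injective ((cyclicSubspaceRep h hrℓ).sampling
      fun j => (innerₛₗ 𝕜 (b j)).domRestrict (U.cyclicSubspace a M)) := by
  have hcols : LinearIndependent 𝕜 Q.col := linearIndependent_iff_card_eq_finrank_span.mpr
    (by rw [Fintype.card_fin, Set.finrank, ← Matrix.rank_eq_finrank_span_cols, hrank])
  refine Representation.injective_sampling_of_linearIndependent _ _ span_orbit_eq_top ?_
  convert hcols using 0
  congr! 1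
  funext m ⟨j, g⟩
  change inner 𝕜 (b j) (cyclicSubspaceRep h hrℓ (.ofAdd g.toAdd) _ : E) = Q (j, g.toAdd) m
  rw [coe_cyclicSubspaceRep_apply, hQ, pow_add, coe_mul, Function.comp_apply]

end InnerProduct

end LinearIsometryEquiv

open LinearIsometryEquiv in
theorem stmt_17_general {H : Type*} [NormedAddCommGroup H] [InnerProductSpace ℂ H]
    (U : H ≃ₗᵢ[ℂ] H) (a : H) {M r ℓ N : ℕ}
    (hM : 0 < M) (hUa : (U ^ M) a = a)
    (hr : r ∣ M) (hℓ : ℓ = M / r)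
    (A : Submodule ℂ H)
    (hA : A = Submodule.span ℂ (Set.range fun k : Fin M => (U ^ (k : ℕ)) a))
    (b : Fin N → H)
    (Q : Matrix (Fin N × Fin ℓ) (Fin M) ℂ)
    (hQ : ∀ (j : Fin N) (n : Fin ℓ) (m : Fin M),
      Q (j, n) m = (inner ℂ (b j) ((U ^ (r * (n : ℕ) + (m : ℕ))) a) : ℂ))
    (hrank : Q.rank = M) :
    ∃ c : Fin N → H, (∀ j, c j ∈ A) ∧
      ∀ x ∈ A, x = ∑ j : Fin N, ∑ n : Fin ℓ,
        (inner ℂ ((U ^ (r * (n : ℕ))) (b j)) x : ℂ) • (U ^ (r * (n : ℕ))) (c j) := by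
  have hrℓ : r * ℓ = M := hℓ ▸ Nat.mul_div_cancel' hr
  have : NeZero ℓ := ⟨right_ne_zero_of_mul (hrℓ ▸ hM.ne')⟩
  obtain rfl : A = U.cyclicSubspace a M := hA
  let := invertibleOfNonzero (by simp [NeZero.ne ℓ] :
    (Fintype.card (Multiplicative (Fin ℓ)) : ℂ) ≠ 0)
  obtain ⟨c, hc⟩ := (cyclicSubspaceRep hUa hrℓ).exists_reconstruction_of_injective_sampling _
    (injective_sampling_cyclicSubspaceRep hUa hrℓ b Q hQ hrank)
  refine ⟨fun j => c j, fun j => (c j).2, fun x hx => ?_⟩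
  calc x = ((⟨x, hx⟩ : U.cyclicSubspace a M) : H) := rfl
    _ = _ := by
      rw [hc ⟨x, hx⟩]
      simp [← Multiplicative.ofAdd.sum_comp, inner_cyclicSubspaceRep_inv_apply,
        coe_cyclicSubspaceRep_apply]

theorem stmt_17 {H : Type*} [NormedAddCommGroup H] [InnerProductSpace ℂ H]
    (U : H ≃ₗᵢ[ℂ] H) (a : H) {M r ℓ N : ℕ}
    (hM : 0 < M) (hUa : (U ^ M) a = a)
    (ha : LinearIndependent ℂ (fun k : Fin M => (U ^ (k : ℕ)) a))
    (hr : r ∣ M) (hℓ : ℓ = M / r)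
    (A : Submodule ℂ H)
    (hA : A = Submodule.span ℂ (Set.range fun k : Fin M => (U ^ (k : ℕ)) a))
    (b : Fin N → H)
    (Q : Matrix (Fin N × Fin ℓ) (Fin M) ℂ)
    (hQ : ∀ (j : Fin N) (n : Fin ℓ) (m : Fin M),
      Q (j, n) m = (inner ℂ (b j) ((U ^ (r * (n : ℕ) + (m : ℕ))) a) : ℂ))
    (hrank : Q.rank = M) :
    ∃ c : Fin N → H, (∀ j, c j ∈ A) ∧
      ∀ x ∈ A, x = ∑ j : Fin N, ∑ n : Fin ℓ,
        (inner ℂ ((U ^ (r * (n : ℕ))) (b j)) x : ℂ) • (U ^ (r * (n : ℕ))) (c j) :=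
  stmt_17_general U a hM hUa hr hℓ A hA b Q hQ hrank
end
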